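/- arXiv:2011.11877 — 2 statements merged into one kernel-verified Lean document; each statement's English description precedes it below -/
import Mathlib

section
/- Let G be a finite simple 3-regular graph on vertex set {1,…,n} with m = 3n/2 edges, let c be a positive integer, let f_c be the associated regression objective, and let OPT_c = inf over z ∈ ℝ^n of f_c(z). Then m − OPT_c/4 − 18·n/c ≤ MAXCUT(G) ≤ m − OPT_c/4. -/
open Classical Finset

/-- The regression objective `f_c(z) = Σ_{{u,v}∈E} (z_u + z_v)² + c·Σ_j (|z_j| − 1)²`
associated to a finite simple graph `G` and a positive integer `c`; it equals
`‖ |Wz| − y ‖₂²` for the corresponding ℓ₂-regression-with-hidden-signs instance. -/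
noncomputable def fObj {n : ℕ} (G : SimpleGraph (Fin n)) [Fintype G.edgeSet] (c : ℕ)
    (z : Fin n → ℝ) : ℝ :=
  (∑ e ∈ G.edgeFinset, Sym2.lift ⟨fun u v => (z u + z v) ^ 2, fun u v => by ring⟩ e)
    + c * ∑ j : Fin n, (|z j| - 1) ^ 2

/-- `cutCard G S` is the number of edges of `G` with exactly one endpoint in `S`. -/
noncomputable def cutCard {n : ℕ} (G : SimpleGraph (Fin n)) [Fintype G.edgeSet]
    (S : Finset (Fin n)) : ℕ :=
  (G.edgeFinset.filter
    (fun e => Sym2.lift ⟨fun u v => ((u ∈ S) ≠ (v ∈ S)), fun u v => propext ne_comm⟩ e)).card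

/-- `maxCut G` is the maximum of `cutCard G S` over all vertex subsets `S`. -/
noncomputable def maxCut {n : ℕ} (G : SimpleGraph (Fin n)) [Fintype G.edgeSet] : ℕ :=
  Finset.univ.sup (fun S : Finset (Fin n) => cutCard G S)

/-!
Encode a cut `S` by the sign vector `±1`: the penalty term vanishes and each edge contributes
`0` if it is cut and `4` otherwise, so `OPT_c ≤ 4 (m − MAXCUT)`. Conversely, round an arbitrary
`z` to the cut `S = {z ≥ 0}`. An uncut edge still pays `(z_u + z_v)² ≥ 4 − 4 (t_u + t_v)` with
`t_j = ||z_j| − 1|`, so summing over edges loses at most `4 Σ_j deg(j) t_j ≤ 12 Σ_j t_j`, and the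
penalty `c t_j²` absorbs `12 t_j` up to `36/c` per vertex.
-/

section EdgeSums

variable {V : Type*} [Fintype V] (G : SimpleGraph V) [DecidableRel G.Adj] [Fintype G.edgeSet]

theorem sum_edgeFinset_lift_add {M : Type*} [AddCommMonoid M] (g : V → M) :
    ∑ e ∈ G.edgeFinset, Sym2.lift ⟨fun u v => g u + g v, fun _ _ => add_comm _ _⟩ e
      = ∑ v, G.degree v • g v := by
  classical
  have h_edge : ∀ e ∈ G.edgeFinset,
      Sym2.lift ⟨fun u v => g u + g v, fun _ _ => add_comm _ _⟩ e
        = ∑ v, if v ∈ e then g v else 0 := by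
    intro e he
    induction e with
    | _ u v =>
      have huv : u ≠ v := (SimpleGraph.mem_edgeFinset.mp he).ne
      have h_ends : univ.filter (· ∈ s(u, v)) = {u, v} := by ext; simp
      rw [Sym2.lift_mk, ← sum_filter, h_ends, sum_pair huv]
  rw [sum_congr rfl h_edge, sum_comm]
  refine sum_congr rfl fun v _ => ?_
  rw [← sum_filter, ← G.incidenceFinset_eq_filter, sum_const, G.card_incidenceFinset_eq_degree]

end EdgeSums

def IsCut {V : Type*} (S : Finset V) : Sym2 V → Prop :=
  Sym2.lift ⟨fun u v => (u ∈ S) ≠ (v ∈ S), fun _ _ => propext ne_comm⟩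

section Cuts

variable {n : ℕ} (G : SimpleGraph (Fin n)) [DecidableRel G.Adj]

theorem card_edgeFinset_sub_cutCard (S : Finset (Fin n)) :
    (#G.edgeFinset : ℝ) - cutCard G S = ∑ e ∈ G.edgeFinset, if IsCut S e then 0 else 1 := by
  have h_split := card_filter_add_card_filter_not (s := G.edgeFinset) (IsCut S)
  rw [sum_ite, sum_const_zero, sum_const, zero_add, nsmul_one,
    show cutCard G S = #(G.edgeFinset.filter (IsCut S)) from rfl, ← h_split]
  push_cast
  ring

theorem cutCard_le_maxCut (S : Finset (Fin n)) : cutCard G S ≤ maxCut G :=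
  le_sup (f := cutCard G) (mem_univ S)

theorem exists_cutCard_eq_maxCut : ∃ S, cutCard G S = maxCut G := by
  obtain ⟨S, -, hS⟩ := exists_mem_eq_sup univ univ_nonempty (cutCard G)
  exact ⟨S, hS.symm⟩

end Cuts

theorem four_sub_le_sq_add {a b : ℝ} (hab : 0 ≤ a ↔ 0 ≤ b) :
    4 - 4 * (|(|a| - 1)| + |(|b| - 1)|) ≤ (a + b) ^ 2 := by
  wlog ha : 0 ≤ a generalizing a b
  · have hb : b < 0 := lt_of_not_ge (hab.not.mp ha)
    have := this (a := -a) (b := -b) ⟨fun _ => by linarith, fun _ => by linarith⟩ (by linarith)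
    rw [abs_neg, abs_neg, show (-a + -b) ^ 2 = (a + b) ^ 2 by ring] at this
    exact this
  have hb := hab.mp ha
  rw [abs_of_nonneg ha, abs_of_nonneg hb]
  nlinarith [neg_abs_le (a - 1), neg_abs_le (b - 1), sq_nonneg (a + b - 2)]

theorem mul_sub_mul_sq_le {c : ℝ} (hc : 0 < c) (k t : ℝ) :
    k * t - c * t ^ 2 ≤ k ^ 2 / (4 * c) := by
  rw [le_div_iff₀ (by positivity)]
  nlinarith [sq_nonneg (2 * c * t - k)]

section Objective

variable {n : ℕ} (G : SimpleGraph (Fin n)) [DecidableRel G.Adj]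

theorem fObj_nonneg (c : ℕ) (z : Fin n → ℝ) : 0 ≤ fObj G c z := by
  refine add_nonneg (sum_nonneg fun e _ => ?_) (by positivity)
  induction e with
  | _ u v => exact sq_nonneg _

def signVec (S : Finset (Fin n)) (j : Fin n) : ℝ := if j ∈ S then 1 else -1

theorem fObj_signVec (c : ℕ) (S : Finset (Fin n)) :
    fObj G c (signVec S) = 4 * ((#G.edgeFinset : ℝ) - cutCard G S) := by
  have h_penalty : ∑ j, (|signVec S j| - 1) ^ 2 = 0 :=
    sum_eq_zero fun j _ => by unfold signVec; split_ifs <;> norm_num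
  have h_edge : ∀ e ∈ G.edgeFinset,
      Sym2.lift ⟨fun u v => (signVec S u + signVec S v) ^ 2, fun _ _ => by ring⟩ e
        = 4 * if IsCut S e then 0 else 1 := by
    intro e _
    induction e with
    | _ u v =>
      simp only [Sym2.lift_mk, IsCut, signVec]
      by_cases hu : u ∈ S <;> by_cases hv : v ∈ S <;> simp [hu, hv] <;> norm_num
  rw [fObj, h_penalty, sum_congr rfl h_edge, ← mul_sum, card_edgeFinset_sub_cutCard]
  ring

noncomputable def signCut (z : Fin n → ℝ) : Finset (Fin n) := univ.filter (0 ≤ z ·)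

theorem lift_sq_add_ge_signCut (z : Fin n → ℝ) (e : Sym2 (Fin n)) :
    4 * (if IsCut (signCut z) e then 0 else 1)
        - 4 * Sym2.lift ⟨fun u v => |(|z u| - 1)| + |(|z v| - 1)|, fun _ _ => add_comm _ _⟩ e
      ≤ Sym2.lift ⟨fun u v => (z u + z v) ^ 2, fun _ _ => by ring⟩ e := by
  induction e with
  | _ u v =>
    simp only [Sym2.lift_mk, IsCut, signCut, mem_filter, mem_univ, true_and]
    split_ifs with h_cut
    · nlinarith [abs_nonneg (|z u| - 1), abs_nonneg (|z v| - 1), sq_nonneg (z u + z v)]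
    · linarith [four_sub_le_sq_add (Iff.of_eq (not_not.mp h_cut))]

theorem sum_lift_sq_add_ge (z : Fin n → ℝ) :
    4 * ((#G.edgeFinset : ℝ) - cutCard G (signCut z)) - 4 * ∑ j, G.degree j * |(|z j| - 1)|
      ≤ ∑ e ∈ G.edgeFinset, Sym2.lift ⟨fun u v => (z u + z v) ^ 2, fun _ _ => by ring⟩ e := by
  set t : Fin n → ℝ := fun j => |(|z j| - 1)|
  calc _ = ∑ e ∈ G.edgeFinset, (4 * (if IsCut (signCut z) e then 0 else 1)
          - 4 * Sym2.lift ⟨fun u v => t u + t v, fun _ _ => add_comm _ _⟩ e) := by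
        simp only [sum_sub_distrib, ← mul_sum, card_edgeFinset_sub_cutCard,
          sum_edgeFinset_lift_add, nsmul_eq_mul, t]
    _ ≤ _ := sum_le_sum fun e _ => lift_sq_add_ge_signCut z e

theorem fObj_ge_of_degree_le {d : ℕ} (hdeg : ∀ v, G.degree v ≤ d) {c : ℕ} (hc : 0 < c)
    (z : Fin n → ℝ) :
    4 * ((#G.edgeFinset : ℝ) - cutCard G (signCut z)) - 4 * d ^ 2 * n / c ≤ fObj G c z := by
  set t : Fin n → ℝ := fun j => |(|z j| - 1)| with ht
  have h_degree : ∑ j, G.degree j * t j ≤ ∑ j, d * t j :=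
    sum_le_sum fun j _ => mul_le_mul_of_nonneg_right (by exact_mod_cast hdeg j) (abs_nonneg _)
  have h_vertices : 4 * ∑ j, d * t j - c * ∑ j, (|z j| - 1) ^ 2 ≤ 4 * d ^ 2 * n / c :=
    calc _ = ∑ j, ((4 * d) * t j - c * t j ^ 2) := by
          simp only [ht, sq_abs, mul_sum, sum_sub_distrib, mul_assoc]
      _ ≤ ∑ _j : Fin n, (4 * d : ℝ) ^ 2 / (4 * c) :=
          sum_le_sum fun j _ => mul_sub_mul_sq_le (by exact_mod_cast hc) _ _
      _ = 4 * d ^ 2 * n / c := by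
          rw [sum_const, card_univ, Fintype.card_fin, nsmul_eq_mul]
          field_simp
  have h_edges := sum_lift_sq_add_ge G z
  rw [fObj]
  linarith

theorem iInf_fObj_le (c : ℕ) : ⨅ z, fObj G c z ≤ 4 * ((#G.edgeFinset : ℝ) - maxCut G) := by
  obtain ⟨S, hS⟩ := exists_cutCard_eq_maxCut G
  rw [← hS, ← fObj_signVec G c S]
  exact ciInf_le ⟨0, Set.forall_mem_range.2 (fObj_nonneg G c)⟩ _

theorem le_iInf_fObj {d : ℕ} (hdeg : ∀ v, G.degree v ≤ d) {c : ℕ} (hc : 0 < c) :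
    4 * ((#G.edgeFinset : ℝ) - maxCut G) - 4 * d ^ 2 * n / c ≤ ⨅ z, fObj G c z :=
  le_ciInf fun z => le_trans (by gcongr; exact_mod_cast cutCard_le_maxCut G _)
    (fObj_ge_of_degree_le G hdeg hc z)

end Objective

theorem maxCut_fObj_two_sided_general {n : ℕ} (G : SimpleGraph (Fin n)) [DecidableRel G.Adj]
    (hreg : ∀ v, G.degree v = 3)
    (c : ℕ) (hc : 0 < c) :
    (G.edgeFinset.card : ℝ) - (⨅ z : Fin n → ℝ, fObj G c z) / 4 - 18 * n / c ≤ maxCut G ∧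
    (maxCut G : ℝ) ≤ (G.edgeFinset.card : ℝ) - (⨅ z : Fin n → ℝ, fObj G c z) / 4 := by
  have h_upper := iInf_fObj_le G c
  have h_lower := le_iInf_fObj G (d := 3) (fun v => (hreg v).le) hc
  have h_const : (4 * 3 ^ 2 * n / c : ℝ) = 2 * (18 * n / c) := by ring
  constructor <;> linarith

/-- Two-sided bound from the MAX-CUT reduction: for a 3-regular graph `G` with `m = 3n/2` edges
and `OPT_c = inf_z f_c(z)`, one has `m − OPT_c/4 − 18·n/c ≤ MAXCUT(G) ≤ m − OPT_c/4`. -/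
theorem maxCut_fObj_two_sided {n : ℕ} (G : SimpleGraph (Fin n)) [DecidableRel G.Adj]
    (hreg : ∀ v, G.degree v = 3) (hm : 2 * G.edgeFinset.card = 3 * n)
    (c : ℕ) (hc : 0 < c) :
    (G.edgeFinset.card : ℝ) - (⨅ z : Fin n → ℝ, fObj G c z) / 4 - 18 * n / c ≤ maxCut G ∧
    (maxCut G : ℝ) ≤ (G.edgeFinset.card : ℝ) - (⨅ z : Fin n → ℝ, fObj G c z) / 4 :=
  maxCut_fObj_two_sided_general G hreg c hc
end

section
/- Let G be a finite simple 3-regular graph on vertex set {1,…,n} with m = 3n/2 edges, let c be a positive integer, let f_c be the associated regression objective, and set m' = m + c·n. Let η ∈ (0,1) satisfy 1 − η − 12/c ≥ 0, and let δ ≥ 0 satisfy δ ≤ 8·(1 − η − 12/c)/(2 + 6c). If there exists z ∈ ℝ^n with f_c(z) ≤ δ·m', then MAXCUT(G) ≥ η·m. -/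
open Classical Finset

/-!
Round `z` to the cut `S = {j | 0 < z j}`. On an edge not cut by `S` the two coordinates have the
same sign, so `(z u + z v)² ≥ 2 - 2((|z u| - 1)² + (|z v| - 1)²)`. Summing over the edges and using
3-regularity, `2 (m - cut S) ≤ Σₑ (z u + z v)² + 6 Σⱼ (|z j| - 1)² ≤ (1 + 6/c) f_c(z)`. Since
`m' = m (2c + 3)/3`, the hypothesis `f_c(z) ≤ δ m'` and the bound on `δ` make the right-hand side
at most `2 (1 - η) m`.
-/

lemma two_sub_le_sq_add_of_pos_iff {a b : ℝ} (hab : 0 < a ↔ 0 < b) :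
    2 - 2 * ((|a| - 1) ^ 2 + (|b| - 1) ^ 2) ≤ (a + b) ^ 2 := by
  by_cases ha : 0 < a
  · rw [abs_of_pos ha, abs_of_pos (hab.mp ha)]
    nlinarith [sq_nonneg (a + b - 1), sq_nonneg (a - b)]
  · rw [abs_of_nonpos (not_lt.mp ha), abs_of_nonpos (not_lt.mp (hab.not.mp ha))]
    nlinarith [sq_nonneg (a + b + 1), sq_nonneg (a - b)]

namespace SimpleGraph

theorem sum_edgeFinset_lift_add {V : Type*} [Fintype V] (G : SimpleGraph V) [DecidableRel G.Adj]
    (h : V → ℝ) :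
    ∑ e ∈ G.edgeFinset, Sym2.lift ⟨fun u v => h u + h v, fun _ _ => add_comm _ _⟩ e
      = ∑ v, G.degree v * h v := by
  have hedge : ∀ e ∈ G.edgeFinset,
      Sym2.lift ⟨fun u v => h u + h v, fun _ _ => add_comm _ _⟩ e
        = ∑ v, if v ∈ e then h v else 0 := by
    intro e he
    induction e with
    | _ a b =>
      have hab : a ≠ b := G.ne_of_adj (mem_edgeFinset.mp he)
      have hpair : ({v | v ∈ s(a, b)} : Finset V) = {a, b} := by ext; simp
      rw [Sym2.lift_mk, ← sum_filter, hpair, sum_pair hab]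
  calc _ = ∑ e ∈ G.edgeFinset, ∑ v, if v ∈ e then h v else 0 := sum_congr rfl hedge
    _ = ∑ v, ∑ e ∈ G.edgeFinset, if v ∈ e then h v else 0 := sum_comm
    _ = ∑ v, G.degree v * h v := by
        refine sum_congr rfl fun v _ => ?_
        rw [← sum_filter, sum_const, ← incidenceFinset_eq_filter, card_incidenceFinset_eq_degree,
          nsmul_eq_mul]

end SimpleGraph

lemma two_mul_card_sub_cutCard_le {n : ℕ} (G : SimpleGraph (Fin n)) [DecidableRel G.Adj]
    (z : Fin n → ℝ) :
    2 * ((#G.edgeFinset : ℝ) - cutCard G {j | 0 < z j}) ≤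
      (∑ e ∈ G.edgeFinset, Sym2.lift ⟨fun u v => (z u + z v) ^ 2, fun _ _ => by ring⟩ e)
        + 2 * ∑ v, G.degree v * (|z v| - 1) ^ 2 := by
  set cut : Sym2 (Fin n) → Prop := Sym2.lift
    ⟨fun u v => (u ∈ ({j | 0 < z j} : Finset (Fin n))) ≠ (v ∈ ({j | 0 < z j} : Finset (Fin n))),
      fun _ _ => propext ne_comm⟩
  set q : Sym2 (Fin n) → ℝ := Sym2.lift ⟨fun u v => (z u + z v) ^ 2, fun _ _ => by ring⟩
  set r : Sym2 (Fin n) → ℝ :=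
    Sym2.lift ⟨fun u v => (|z u| - 1) ^ 2 + (|z v| - 1) ^ 2, fun _ _ => add_comm _ _⟩
  have hpoint : ∀ e : Sym2 (Fin n), 2 - 2 * (if cut e then 1 else 0) ≤ q e + 2 * r e := by
    intro e
    induction e with
    | _ a b =>
      by_cases hab : cut s(a, b)
      · rw [if_pos hab]
        simp only [q, r, Sym2.lift_mk]
        norm_num
        positivity
      · rw [if_neg hab]
        have hsign : 0 < z a ↔ 0 < z b := by simpa [cut] using hab
        simpa [q, r] using two_sub_le_sq_add_of_pos_iff hsign
  calc 2 * ((#G.edgeFinset : ℝ) - cutCard G {j | 0 < z j})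
      = ∑ e ∈ G.edgeFinset, (2 - 2 * (if cut e then 1 else 0)) := by
        rw [cutCard, natCast_card_filter, sum_sub_distrib, ← mul_sum, sum_const, nsmul_eq_mul]
        ring
    _ ≤ ∑ e ∈ G.edgeFinset, (q e + 2 * r e) := sum_le_sum fun e _ => hpoint e
    _ = _ := by
        rw [sum_add_distrib, ← mul_sum,
          SimpleGraph.sum_edgeFinset_lift_add G (fun v => (|z v| - 1) ^ 2)]

lemma mul_two_mul_card_sub_cutCard_le_fObj {n : ℕ} (G : SimpleGraph (Fin n)) [DecidableRel G.Adj]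
    (hreg : ∀ v, G.degree v = 3) (c : ℕ) (z : Fin n → ℝ) :
    c * (2 * ((#G.edgeFinset : ℝ) - cutCard G {j | 0 < z j})) ≤ (c + 6) * fObj G c z := by
  have hcut := two_mul_card_sub_cutCard_le G z
  simp only [hreg, Nat.cast_ofNat, ← mul_sum] at hcut
  have hq : 0 ≤ ∑ e ∈ G.edgeFinset, Sym2.lift ⟨fun u v => (z u + z v) ^ 2, fun _ _ => by ring⟩ e :=
    sum_nonneg fun e _ => by induction e with | _ a b => exact sq_nonneg _
  have hH : 0 ≤ ∑ v, (|z v| - 1) ^ 2 := sum_nonneg fun v _ => sq_nonneg _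
  rw [fObj]
  nlinarith [mul_nonneg (Nat.cast_nonneg c : (0:ℝ) ≤ c) hH]

lemma delta_mul_le {c η δ : ℝ} (hc : 0 < c) (hη : 0 ≤ η) (hηc : 0 ≤ 1 - η - 12 / c)
    (hδ : δ ≤ 8 * (1 - η - 12 / c) / (2 + 6 * c)) :
    δ * ((c + 6) * (2 * c + 3)) ≤ 6 * c * (1 - η) := by
  have hcancel : (1 - η - 12 / c) * c = (1 - η) * c - 12 := by field_simp
  have hs : 0 ≤ (1 - η) * c - 12 := hcancel ▸ mul_nonneg hηc hc.le
  have hδ' : δ * (c * (2 + 6 * c)) ≤ 8 * ((1 - η) * c - 12) := by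
    rw [le_div_iff₀ (by positivity)] at hδ
    nlinarith
  have hpos : 0 < c * (2 + 6 * c) := by positivity
  refine le_of_mul_le_mul_left ?_ hpos
  calc c * (2 + 6 * c) * (δ * ((c + 6) * (2 * c + 3)))
      = δ * (c * (2 + 6 * c)) * ((c + 6) * (2 * c + 3)) := by ring
    _ ≤ 8 * ((1 - η) * c - 12) * ((c + 6) * (2 * c + 3)) := by gcongr
    _ ≤ c * (2 + 6 * c) * (6 * c * (1 - η)) := by
        nlinarith [mul_nonneg hs hc.le, mul_nonneg (mul_nonneg hs hc.le) hc.le,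
          mul_nonneg hη hc.le, mul_nonneg (mul_nonneg hη hc.le) hc.le]

theorem fObj_soundness_general {n : ℕ} (G : SimpleGraph (Fin n)) [DecidableRel G.Adj]
    (hreg : ∀ v, G.degree v = 3) (hm : 2 * G.edgeFinset.card = 3 * n)
    (c : ℕ) (hc : 0 < c) (η δ : ℝ) (hη : η ∈ Set.Ioo (0 : ℝ) 1)
    (hηc : 0 ≤ 1 - η - 12 / c)
    (hδ : δ ≤ 8 * (1 - η - 12 / c) / (2 + 6 * c))
    (hz : ∃ z : Fin n → ℝ, fObj G c z ≤ δ * ((G.edgeFinset.card : ℝ) + c * n)) :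
    η * G.edgeFinset.card ≤ maxCut G := by
  obtain ⟨z, hfz⟩ := hz
  set m : ℝ := (G.edgeFinset.card : ℝ)
  set K : ℕ := cutCard G {j | 0 < z j}
  have hc' : (0 : ℝ) < c := Nat.cast_pos.mpr hc
  have hm' : 2 * m = 3 * (n : ℝ) := by simp only [m]; exact_mod_cast hm
  have hKmax : (K : ℝ) ≤ maxCut G := by exact_mod_cast le_sup (f := cutCard G) (mem_univ _)
  have hcut : 6 * c * (m - K) ≤ 6 * c * ((1 - η) * m) :=
    calc 6 * c * (m - K) = 3 * (c * (2 * (m - K))) := by ring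
      _ ≤ 3 * ((c + 6) * (δ * (m + c * n))) := by
          have := (mul_two_mul_card_sub_cutCard_le_fObj G hreg c z).trans
            (mul_le_mul_of_nonneg_left hfz (by positivity))
          linarith
      _ = δ * ((c + 6) * (2 * c + 3)) * m := by linear_combination (-(c + 6) * δ * c) * hm'
      _ ≤ 6 * c * (1 - η) * m :=
          mul_le_mul_of_nonneg_right (delta_mul_le hc' hη.1.le hηc hδ) (by positivity)
      _ = 6 * c * ((1 - η) * m) := by ring
  linarith [le_of_mul_le_mul_left hcut (by positivity)]

/-- Soundness of the MAX-CUT reduction: for a 3-regular graph `G` with `m = 3n/2` edges and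
`m' = m + c·n`, if `η ∈ (0,1)` satisfies `1 − η − 12/c ≥ 0` and `0 ≤ δ ≤ 8(1 − η − 12/c)/(2+6c)`,
and some `z` achieves `f_c(z) ≤ δ·m'`, then `MAXCUT(G) ≥ η·m`. -/
theorem fObj_soundness {n : ℕ} (G : SimpleGraph (Fin n)) [DecidableRel G.Adj]
    (hreg : ∀ v, G.degree v = 3) (hm : 2 * G.edgeFinset.card = 3 * n)
    (c : ℕ) (hc : 0 < c) (η δ : ℝ) (hη : η ∈ Set.Ioo (0 : ℝ) 1)
    (hηc : 0 ≤ 1 - η - 12 / c) (hδ0 : 0 ≤ δ)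
    (hδ : δ ≤ 8 * (1 - η - 12 / c) / (2 + 6 * c))
    (hz : ∃ z : Fin n → ℝ, fObj G c z ≤ δ * ((G.edgeFinset.card : ℝ) + c * n)) :
    η * G.edgeFinset.card ≤ maxCut G :=
  fObj_soundness_general G hreg hm c hc η δ hη hηc hδ hz
end
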